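/- arXiv:1811.03531 — 6 statements merged into one kernel-verified Lean document; each statement's English description precedes it below -/
import Mathlib

section
/- Let S ⊆ ℝ^d × {±1} be finite, and let w* = Σ_i α_i y_i x_i with α_i ≥ 0, Σ_i α_i y_i = 0, and Σ_i α_i > 0. Then for every linear classifier h(x) = sgn(⟨w,x⟩+b) with y_i(⟨w,x_i⟩+b) > 0 for all i, and every (x,y) ∈ S, there exists c > 0 such that sgn(⟨w, x − c·y·w*⟩ + b) = −y. In other words, −y·w* is an adversarial direction for every S-accurate linear classifier at every point of S. -/
open scoped RealInnerProductSpace BigOperators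

/-- The sign function, with `sgn t = 1` if `t > 0` and `-1` otherwise. -/
noncomputable def sgn (t : ℝ) : ℝ := if 0 < t then 1 else -1

theorem stmt1 {d N : ℕ}
    (x : Fin N → EuclideanSpace ℝ (Fin d)) (y : Fin N → ℝ) (α : Fin N → ℝ)
    (hy : ∀ i, y i = 1 ∨ y i = -1)
    (hα : ∀ i, 0 ≤ α i) (hsum : ∑ i, α i * y i = 0)
    (hαpos : 0 < ∑ i, α i)
    (wstar : EuclideanSpace ℝ (Fin d))
    (hwstar : wstar = ∑ i, (α i * y i) • x i)
    (w : EuclideanSpace ℝ (Fin d)) (b : ℝ)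
    (hacc : ∀ i, 0 < y i * (⟪w, x i⟫ + b)) :
    ∀ i, ∃ c > (0 : ℝ), sgn (⟪w, x i - (c * y i) • wstar⟫ + b) = - y i := by
  -- ⟪w, wstar⟫ > 0
  have hP : 0 < ⟪w, wstar⟫ := by
    have h1 : ⟪w, wstar⟫ = ∑ i, (α i * y i) * ⟪w, x i⟫ := by
      rw [hwstar, inner_sum]
      exact Finset.sum_congr rfl fun i _ => real_inner_smul_right _ _ _
    have h2 : ⟪w, wstar⟫ = ∑ i, α i * (y i * (⟪w, x i⟫ + b)) := by
      rw [h1]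
      have : ∑ i, α i * (y i * (⟪w, x i⟫ + b))
          = ∑ i, ((α i * y i) * ⟪w, x i⟫ + (α i * y i) * b) := by
        exact Finset.sum_congr rfl fun i _ => by ring
      rw [this, Finset.sum_add_distrib, ← Finset.sum_mul, hsum]
      ring
    rw [h2]
    obtain ⟨j, _, hj⟩ : ∃ j ∈ Finset.univ, 0 < α j := by
      by_contra h
      push_neg at h
      have : ∑ i, α i ≤ 0 := Finset.sum_nonpos fun i hi => h i hi
      linarith
    have hjmem : j ∈ (Finset.univ : Finset (Fin N)) := Finset.mem_univ j
    refine Finset.sum_pos' (fun i _ => mul_nonneg (hα i) (le_of_lt (hacc i))) ⟨j, hjmem, ?_⟩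
    exact mul_pos hj (hacc j)
  intro i
  set A := ⟪w, x i⟫ + b with hA
  refine ⟨(|A| + 1) / ⟪w, wstar⟫, div_pos (by positivity) hP, ?_⟩
  have hkey : ⟪w, x i - (((|A| + 1) / ⟪w, wstar⟫) * y i) • wstar⟫ + b
      = A - y i * (|A| + 1) := by
    rw [inner_sub_right, real_inner_smul_right]
    have h3 : (|A| + 1) / ⟪w, wstar⟫ * y i * ⟪w, wstar⟫ = y i * (|A| + 1) := by
      generalize hq : ⟪w, wstar⟫ = P at hP ⊢
      field_simp [ne_of_gt hP]
    rw [h3, hA]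
    ring
  rw [hkey]
  rcases hy i with h1 | h1
  · have hApos : 0 < A := by have := hacc i; rw [h1] at this; linarith
    rw [h1, abs_of_pos hApos]
    simp only [sgn]
    rw [if_neg (by linarith)]
  · have hAneg : A < 0 := by have := hacc i; rw [h1] at this; nlinarith
    rw [h1, abs_of_neg hAneg]
    simp only [sgn]
    rw [if_pos (by linarith)]
    norm_num
end

section
/- Let S, w*, and the dual coefficients α_i be as in the SVM dual setting, and let h(x)=sgn(⟨w,x⟩+b) have margin γ_h > 0 on S. Fix any point (x,y) with y(⟨w,x⟩+b) > 0. Then for every c > y(⟨w,x⟩+b) / (γ_h · Σ_i α_i), we have y(⟨w, x − c·y·w*⟩ + b) < 0, i.e., h misclassifies the perturbed point x − c·y·w*. -/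
open scoped RealInnerProductSpace BigOperators

theorem stmt3 {d N : ℕ}
    (x : Fin N → EuclideanSpace ℝ (Fin d)) (y : Fin N → ℝ) (α : Fin N → ℝ)
    (hy : ∀ i, y i = 1 ∨ y i = -1)
    (hα : ∀ i, 0 ≤ α i) (hsum : ∑ i, α i * y i = 0)
    (hαpos : 0 < ∑ i, α i)
    (wstar : EuclideanSpace ℝ (Fin d))
    (hwstar : wstar = ∑ i, (α i * y i) • x i)
    (w : EuclideanSpace ℝ (Fin d)) (b : ℝ) (γ : ℝ) (hγ : 0 < γ)
    (hmargin : ∀ i, γ ≤ y i * (⟪w, x i⟫ + b))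
    (x₀ : EuclideanSpace ℝ (Fin d)) (y₀ : ℝ) (hy₀ : y₀ = 1 ∨ y₀ = -1)
    (hpos : 0 < y₀ * (⟪w, x₀⟫ + b)) :
    ∀ c : ℝ, y₀ * (⟪w, x₀⟫ + b) / (γ * ∑ i, α i) < c →
      y₀ * (⟪w, x₀ - (c * y₀) • wstar⟫ + b) < 0 := by
  intro c hc
  have hy₀sq : y₀ * y₀ = 1 := by rcases hy₀ with h | h <;> rw [h] <;> ring
  have hww : ⟪w, wstar⟫ = ∑ i, α i * (y i * (⟪w, x i⟫ + b)) := by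
    rw [hwstar, inner_sum]
    have : ∑ i, α i * (y i * (⟪w, x i⟫ + b))
        = (∑ i, α i * y i * ⟪w, x i⟫) + (∑ i, α i * y i) * b := by
      rw [Finset.sum_mul, ← Finset.sum_add_distrib]
      exact Finset.sum_congr rfl fun i _ => by ring
    rw [this, hsum, zero_mul, add_zero]
    exact Finset.sum_congr rfl fun i _ => by rw [real_inner_smul_right]
  have hlow : γ * ∑ i, α i ≤ ⟪w, wstar⟫ := by
    rw [hww, Finset.mul_sum]
    exact Finset.sum_le_sum fun i _ => by
      rw [mul_comm γ (α i)]
      exact mul_le_mul_of_nonneg_left (hmargin i) (hα i)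
  have hden : 0 < γ * ∑ i, α i := mul_pos hγ hαpos
  have hcpos : 0 < c := lt_trans (div_pos hpos hden) hc
  have hstep : y₀ * (⟪w, x₀⟫ + b) < c * ⟪w, wstar⟫ := by
    calc y₀ * (⟪w, x₀⟫ + b) < c * (γ * ∑ i, α i) := by
          exact (div_lt_iff₀ hden).mp hc
      _ ≤ c * ⟪w, wstar⟫ := mul_le_mul_of_nonneg_left hlow hcpos.le
  have expand : y₀ * (⟪w, x₀ - (c * y₀) • wstar⟫ + b)
      = y₀ * (⟪w, x₀⟫ + b) - c * (y₀ * y₀) * ⟪w, wstar⟫ := by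
    rw [inner_sub_right, real_inner_smul_right]; ring
  rw [expand, hy₀sq]
  linarith
end

section
/- Let h : ℝ^d → {α, β} be a function such that C := h⁻¹(α) is convex, and let x_α, x_β ∈ ℝ^d with h(x_α) = α and h(x_β) = β. Set v = x_β − x_α. Then for every x with h(x) = α, there exists c > 0 such that h(x + c·v) = β. That is, v = x_β − x_α is an adversarial direction at every α-labeled point for every classifier whose α-decision region is convex and which labels x_α as α and x_β as β. -/
theorem stmt5 {d : ℕ} {L : Type} (a β : L) (hab : a ≠ β)
    (h : EuclideanSpace ℝ (Fin d) → L)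
    (hrange : ∀ x, h x = a ∨ h x = β)
    (hconv : Convex ℝ {x | h x = a}) (hcl : IsClosed {x | h x = a})
    (xa xb : EuclideanSpace ℝ (Fin d)) (hxa : h xa = a) (hxb : h xb = β) :
    ∀ x, h x = a → ∃ c > (0 : ℝ), h (x + c • (xb - xa)) = β := by
  intro x hx
  by_contra hcon
  push_neg at hcon
  -- every point on the ray is labeled a
  have hray : ∀ c : ℝ, 0 < c → h (x + c • (xb - xa)) = a := by
    intro c hc
    rcases hrange (x + c • (xb - xa)) with h1 | h1
    · exact h1
    · exact absurd h1 (hcon c hc)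
  -- sequence of convex combinations converging to xb
  set t : ℕ → ℝ := fun n => 1 / (n + 1 : ℝ) with ht
  have htpos : ∀ n, 0 < t n := fun n => by positivity
  have htle : ∀ n, t n ≤ 1 := by
    intro n
    rw [ht]
    rw [div_le_one (by positivity)]
    linarith [Nat.cast_nonneg (α := ℝ) n]
  set z : ℕ → EuclideanSpace ℝ (Fin d) := fun n =>
    xa + t n • (x - xa) + (xb - xa) with hz
  have hzmem : ∀ n, z n ∈ {y | h y = a} := by
    intro n
    have hmem := hconv hxa (hray (1 / t n) (by positivity)) (a := 1 - t n) (b := t n)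
      (by linarith [htle n]) (le_of_lt (htpos n)) (by ring)
    have : (1 - t n) • xa + t n • (x + (1 / t n) • (xb - xa)) = z n := by
      rw [hz]
      have h0 : t n ≠ 0 := ne_of_gt (htpos n)
      rw [smul_add, smul_smul, mul_one_div_cancel h0]
      module
    rwa [this] at hmem
  -- z n → xb
  have htlim : Filter.Tendsto t Filter.atTop (nhds 0) := by
    rw [ht]
    exact tendsto_one_div_add_atTop_nhds_zero_nat
  have hzlim : Filter.Tendsto z Filter.atTop (nhds xb) := by
    have : Filter.Tendsto z Filter.atTop
        (nhds (xa + (0 : ℝ) • (x - xa) + (xb - xa))) := by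
      apply Filter.Tendsto.add
      apply Filter.Tendsto.add tendsto_const_nhds
      exact htlim.smul tendsto_const_nhds
      exact tendsto_const_nhds
    simpa using this
  have hxbmem : xb ∈ {y | h y = a} := hcl.mem_of_tendsto hzlim
    (Filter.Eventually.of_forall hzmem)
  exact hab (hxbmem.symm.trans hxb)
end

section
/- Let f(x) = Σ_{i=1}^L v_i · max(0, ⟨w_i,x⟩+b_i) with v_i ≥ 0 and a > 0. Then {x : f(x) > a} is a union of open half-spaces {x : ⟨Σ_{i∈I} v_i w_i, x⟩ + Σ_{i∈I} v_i b_i > a} over nonempty I ⊆ {1,…,L}, and hence {x : f(x) ≤ a} is convex. -/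
open scoped RealInnerProductSpace BigOperators

theorem stmt9 {d L : ℕ} (w : Fin L → EuclideanSpace ℝ (Fin d)) (b v : Fin L → ℝ)
    (hv : ∀ i, 0 ≤ v i) (a : ℝ) (ha : 0 < a)
    (f : EuclideanSpace ℝ (Fin d) → ℝ)
    (hf : ∀ x, f x = ∑ i, v i * max 0 (⟪w i, x⟫ + b i)) :
    {x | a < f x} =
      (⋃ (I : Finset (Fin L)) (_ : I.Nonempty),
        {x | a < ⟪∑ i ∈ I, v i • w i, x⟫ + ∑ i ∈ I, v i * b i}) ∧
      Convex ℝ {x | f x ≤ a} := by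
  have key : ∀ (I : Finset (Fin L)) (x : EuclideanSpace ℝ (Fin d)),
      ⟪∑ i ∈ I, v i • w i, x⟫ + ∑ i ∈ I, v i * b i
        = ∑ i ∈ I, v i * (⟪w i, x⟫ + b i) := by
    intro I x
    rw [sum_inner, ← Finset.sum_add_distrib]
    congr 1; ext i
    rw [real_inner_smul_left]; ring
  constructor
  · ext x
    simp only [Set.mem_setOf_eq, Set.mem_iUnion]
    constructor
    · intro h
      refine ⟨Finset.univ.filter (fun i => 0 < ⟪w i, x⟫ + b i), ?_, ?_⟩
      · by_contra hne
        rw [Finset.not_nonempty_iff_eq_empty, Finset.filter_eq_empty_iff] at hne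
        have : f x ≤ 0 := by
          rw [hf]
          apply Finset.sum_nonpos
          intro i _
          have : ⟪w i, x⟫ + b i ≤ 0 := le_of_not_gt (hne (Finset.mem_univ i))
          rw [max_eq_left this, mul_zero]
        linarith
      · rw [key]
        calc a < f x := h
          _ = ∑ i ∈ Finset.univ.filter (fun i => 0 < ⟪w i, x⟫ + b i),
                v i * (⟪w i, x⟫ + b i) := by
            rw [hf, ← Finset.sum_filter_add_sum_filter_not Finset.univ
              (fun i => 0 < ⟪w i, x⟫ + b i)]
            have h1 : ∑ i ∈ Finset.univ.filter (fun i => ¬ 0 < ⟪w i, x⟫ + b i),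
                v i * max 0 (⟪w i, x⟫ + b i) = 0 := by
              apply Finset.sum_eq_zero
              intro i hi
              simp only [Finset.mem_filter] at hi
              rw [max_eq_left (le_of_not_gt hi.2), mul_zero]
            rw [h1, add_zero]
            apply Finset.sum_congr rfl
            intro i hi
            simp only [Finset.mem_filter] at hi
            rw [max_eq_right (le_of_lt hi.2)]
    · rintro ⟨I, hI, h⟩
      rw [key] at h
      refine lt_of_lt_of_le h ?_
      rw [hf]
      calc ∑ i ∈ I, v i * (⟪w i, x⟫ + b i)
          ≤ ∑ i ∈ I, v i * max 0 (⟪w i, x⟫ + b i) := by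
            apply Finset.sum_le_sum
            intro i _
            exact mul_le_mul_of_nonneg_left (le_max_right _ _) (hv i)
        _ ≤ ∑ i, v i * max 0 (⟪w i, x⟫ + b i) := by
            apply Finset.sum_le_sum_of_subset_of_nonneg (Finset.subset_univ I)
            intro i _ _
            exact mul_nonneg (hv i) (le_max_left _ _)
  · intro x hx y hy s t hs ht hst
    simp only [Set.mem_setOf_eq] at hx hy ⊢
    have hfle : f (s • x + t • y) ≤ s * f x + t * f y := by
      rw [hf, hf, hf, Finset.mul_sum, Finset.mul_sum, ← Finset.sum_add_distrib]
      apply Finset.sum_le_sum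
      intro i _
      have hin : ⟪w i, s • x + t • y⟫ + b i
          = s * (⟪w i, x⟫ + b i) + t * (⟪w i, y⟫ + b i) := by
        rw [inner_add_right, real_inner_smul_right, real_inner_smul_right]
        linear_combination (-(b i)) * hst
      rw [hin]
      have hmax : max 0 (s * (⟪w i, x⟫ + b i) + t * (⟪w i, y⟫ + b i))
          ≤ s * max 0 (⟪w i, x⟫ + b i) + t * max 0 (⟪w i, y⟫ + b i) := by
        apply max_le
        · positivity
        · exact add_le_add (mul_le_mul_of_nonneg_left (le_max_right _ _) hs)
            (mul_le_mul_of_nonneg_left (le_max_right _ _) ht)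
      calc v i * max 0 (s * (⟪w i, x⟫ + b i) + t * (⟪w i, y⟫ + b i))
          ≤ v i * (s * max 0 (⟪w i, x⟫ + b i) + t * max 0 (⟪w i, y⟫ + b i)) :=
            mul_le_mul_of_nonneg_left hmax (hv i)
        _ = s * (v i * max 0 (⟪w i, x⟫ + b i)) + t * (v i * max 0 (⟪w i, y⟫ + b i)) := by ring
    calc f (s • x + t • y) ≤ s * f x + t * f y := hfle
      _ ≤ s * a + t * a := add_le_add (mul_le_mul_of_nonneg_left hx hs)
          (mul_le_mul_of_nonneg_left hy ht)
      _ = a := by rw [← add_mul, hst, one_mul]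
end

section
/- Fix a finite set S ⊆ ℝ^d × {±1} containing at least one point with label +1 and one with label −1. Then there exists a vector v ∈ ℝ^d such that: for every h of the form h(x) = 1 if Σ_{i=1}^L v_i·max(0,⟨w_i,x⟩+b_i) > a (with v_i ≥ 0 and a > 0) and −1 otherwise, if h correctly classifies all of S, then for every point x with h(x) = −1 there exists c > 0 with h(x + c·v) = 1. Explicitly, v = x_β − x_α works, where (x_α,−1) ∈ S and (x_β,+1) ∈ S. -/
open scoped RealInnerProductSpace BigOperators

theorem stmt12 {d : ℕ} (S : Finset (EuclideanSpace ℝ (Fin d) × ℤ))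
    (hpos : ∃ p ∈ S, p.2 = 1) (hneg : ∃ p ∈ S, p.2 = -1) :
    ∃ xα xβ : EuclideanSpace ℝ (Fin d), (xα, -1) ∈ S ∧ (xβ, 1) ∈ S ∧
      ∀ (L : ℕ) (w : Fin L → EuclideanSpace ℝ (Fin d)) (b vv : Fin L → ℝ) (a : ℝ),
        (∀ i, 0 ≤ vv i) → 0 < a →
        ∀ h : EuclideanSpace ℝ (Fin d) → ℤ,
          (∀ x, h x = if a < ∑ i, vv i * max 0 (⟪w i, x⟫ + b i) then 1 else -1) →
          (∀ p ∈ S, h p.1 = p.2) →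
          ∀ x, h x = -1 → ∃ c > (0 : ℝ), h (x + c • (xβ - xα)) = 1 := by
  obtain ⟨⟨xβ, lβ⟩, hβS, hlβ⟩ := hpos
  obtain ⟨⟨xα, lα⟩, hαS, hlα⟩ := hneg
  simp only at hlβ hlα
  subst hlβ; subst hlα
  refine ⟨xα, xβ, hαS, hβS, ?_⟩
  intro L w b vv a hvv ha h hdef hacc x _
  set v := xβ - xα with hv
  have hβ : a < ∑ i, vv i * max 0 (⟪w i, xβ⟫ + b i) := by
    have hb := hacc _ hβS
    rw [hdef] at hb
    by_contra hc
    rw [if_neg hc] at hb; norm_num at hb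
  have hα : ∑ i, vv i * max 0 (⟪w i, xα⟫ + b i) ≤ a := by
    have hb := hacc _ hαS
    rw [hdef] at hb
    by_contra hc
    push_neg at hc
    rw [if_pos hc] at hb; norm_num at hb
  set K := ∑ i, vv i * max 0 ⟪w i, v⟫ with hKdef
  have hKpos : 0 < K := by
    have hsub : ∑ i, vv i * max 0 (⟪w i, xβ⟫ + b i)
        ≤ (∑ i, vv i * max 0 (⟪w i, xα⟫ + b i)) + K := by
      rw [hKdef, ← Finset.sum_add_distrib]
      apply Finset.sum_le_sum
      intro i _
      have hinner : ⟪w i, xβ⟫ = ⟪w i, xα⟫ + ⟪w i, v⟫ := by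
        rw [hv, inner_sub_right]; ring
      rw [hinner]
      have h1 : max 0 (⟪w i, xα⟫ + ⟪w i, v⟫ + b i)
          ≤ max 0 (⟪w i, xα⟫ + b i) + max 0 ⟪w i, v⟫ := by
        apply max_le
        · have := le_max_left (0:ℝ) (⟪w i, xα⟫ + b i)
          have := le_max_left (0:ℝ) ⟪w i, v⟫
          linarith
        · have := le_max_right (0:ℝ) (⟪w i, xα⟫ + b i)
          have := le_max_right (0:ℝ) ⟪w i, v⟫
          linarith
      nlinarith [hvv i]
    linarith
  set M := ∑ i, vv i * |⟪w i, x⟫ + b i| with hMdef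
  have hM : 0 ≤ M := by
    apply Finset.sum_nonneg
    intro i _
    exact mul_nonneg (hvv i) (abs_nonneg _)
  refine ⟨(a + M + 1) / K, by positivity, ?_⟩
  rw [hdef]
  rw [if_pos]
  set c := (a + M + 1) / K with hcdef
  have hcK : c * K = a + M + 1 := by
    rw [hcdef]; field_simp
  have hc0 : 0 ≤ c := by positivity
  have hlow : c * K - M ≤ ∑ i, vv i * max 0 (⟪w i, x + c • v⟫ + b i) := by
    have : ∀ i ∈ Finset.univ,
        c * (vv i * max 0 ⟪w i, v⟫) - vv i * |⟪w i, x⟫ + b i|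
          ≤ vv i * max 0 (⟪w i, x + c • v⟫ + b i) := by
      intro i _
      have hinner : ⟪w i, x + c • v⟫ = ⟪w i, x⟫ + c * ⟪w i, v⟫ := by
        rw [inner_add_right, real_inner_smul_right]
      rw [hinner]
      rcases le_total ⟪w i, v⟫ 0 with hs | hs
      · rw [max_eq_left hs]
        have hnn : 0 ≤ vv i * max 0 (⟪w i, x⟫ + c * ⟪w i, v⟫ + b i) :=
          mul_nonneg (hvv i) (le_max_left _ _)
        have := mul_nonneg (hvv i) (abs_nonneg (⟪w i, x⟫ + b i))
        linarith
      · rw [max_eq_right hs]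
        have h2 : ⟪w i, x⟫ + c * ⟪w i, v⟫ + b i
            ≤ max 0 (⟪w i, x⟫ + c * ⟪w i, v⟫ + b i) := le_max_right _ _
        have h3 : -(|⟪w i, x⟫ + b i|) ≤ ⟪w i, x⟫ + b i := neg_abs_le _
        nlinarith [hvv i]
    have := Finset.sum_le_sum this
    calc c * K - M = ∑ i, (c * (vv i * max 0 ⟪w i, v⟫) - vv i * |⟪w i, x⟫ + b i|) := by
          rw [Finset.sum_sub_distrib, ← Finset.mul_sum, hKdef, hMdef]
      _ ≤ _ := this
  linarith [hlow, hcK]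
end

section
/- Let S ⊆ ℝ^d × {1,…,K} be finite, fix distinct labels k and l both present in S, and suppose the set of S-accurate multi-class linear classifiers h(x) = argmax_i (Wx+b)_i is nonempty. Then there exists a vector v ∈ ℝ^d such that for every S-accurate multi-class linear classifier h and every (x, k) ∈ S[k], v is an adversarial direction for h at x: there is c > 0 with h(x + c·v) ≠ k. -/
open scoped RealInnerProductSpace

theorem stmt17 {d K : ℕ} (S : Finset (EuclideanSpace ℝ (Fin d) × Fin K))
    (k l : Fin K) (hkl : k ≠ l)
    (hk : ∃ p ∈ S, p.2 = k) (hl : ∃ p ∈ S, p.2 = l)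
    (hne : ∃ (W : Fin K → EuclideanSpace ℝ (Fin d)) (b : Fin K → ℝ),
      ∀ p ∈ S, ∀ j, j ≠ p.2 → ⟪W j, p.1⟫ + b j < ⟪W p.2, p.1⟫ + b p.2) :
    ∃ v : EuclideanSpace ℝ (Fin d),
      ∀ (W : Fin K → EuclideanSpace ℝ (Fin d)) (b : Fin K → ℝ),
        (∀ p ∈ S, ∀ j, j ≠ p.2 → ⟪W j, p.1⟫ + b j < ⟪W p.2, p.1⟫ + b p.2) →
        ∀ p ∈ S, p.2 = k →
          ∃ c > (0 : ℝ), ∃ j, j ≠ k ∧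
            ⟪W k, p.1 + c • v⟫ + b k ≤ ⟪W j, p.1 + c • v⟫ + b j := by
  obtain ⟨p0, hp0S, hp0⟩ := hk
  obtain ⟨q0, hq0S, hq0⟩ := hl
  refine ⟨q0.1 - p0.1, ?_⟩
  intro W b hacc p hpS hpk
  have h1 := hacc p0 hp0S l (by rw [hp0]; exact hkl.symm)
  have h2 := hacc q0 hq0S k (by rw [hq0]; exact hkl)
  rw [hp0] at h1
  rw [hq0] at h2
  have htneg : ⟪W k, q0.1 - p0.1⟫ - ⟪W l, q0.1 - p0.1⟫ < 0 := by
    simp only [inner_sub_right]; linarith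
  set t := ⟪W k, q0.1 - p0.1⟫ - ⟪W l, q0.1 - p0.1⟫ with ht
  have hA := hacc p hpS l (by rw [hpk]; exact hkl.symm)
  rw [hpk] at hA
  set A := ⟪W k, p.1⟫ + b k - ⟪W l, p.1⟫ - b l with hAdef
  have hApos : 0 < A := by simp only [hAdef]; linarith
  refine ⟨(A + 1) / (-t), div_pos (by linarith) (by linarith), l, hkl.symm, ?_⟩
  have hct : (A + 1) / (-t) * t = -(A + 1) := by
    rw [div_mul_eq_mul_div, div_eq_iff (by linarith : -t ≠ 0)]; ring
  simp only [inner_add_right, real_inner_smul_right]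
  nlinarith [hct]
end
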